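/- Fix k ≥ 2, n ≥ 1, m ≥ 1, p ∈ (0,1), u0 = (1−p)·2^{−k}, let γ0, η0 ∈ (0,1) satisfy the defining equations, and fix A > 0. Let γ(0),…,γ(n) and η(0),…,η(n) be arbitrary real sequences with γ0 ≤ γ(z) < 1 and η0 ≤ η(z) < 1 for every 0 ≤ z ≤ n. Then E[X_*²] ≤ 2^n · Σ_{z=0}^n C(n,z) · f(z/n, γ(z), η(z))^m. -/

import Mathlib

open Finset Filter Real

noncomputable section

abbrev Formula (n k m : ℕ) := Fin m → Fin k → Fin n × Bool

def clauseSat {n k : ℕ} (σ : Fin n → Bool) (c : Fin k → Fin n × Bool) : Prop :=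
  ∃ j : Fin k, σ (c j).1 = (c j).2

instance {n k : ℕ} (σ : Fin n → Bool) (c : Fin k → Fin n × Bool) :
    Decidable (clauseSat σ c) := by unfold clauseSat; infer_instance

def Hscore {n k m : ℕ} (σ : Fin n → Bool) (F : Formula n k m) : ℤ :=
  ∑ i : Fin m, ∑ j : Fin k, (if σ (F i j).1 = (F i j).2 then (1:ℤ) else -1)

def Uscore {n k m : ℕ} (σ : Fin n → Bool) (F : Formula n k m) : ℕ :=
  (Finset.univ.filter fun i => ¬ clauseSat σ (F i)).card

def EV {β : Type*} [Fintype β] (X : β → ℝ) : ℝ := (∑ x : β, X x) / (Fintype.card β)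

def Xstar (n k m : ℕ) (u0 γ0 η0 A : ℝ) (F : Formula n k m) : ℝ :=
  ∑ σ : Fin n → Bool,
    if 0 ≤ Hscore σ F ∧ u0 * m ≤ (Uscore σ F : ℝ) ∧
        (Uscore σ F : ℝ) ≤ u0 * m + A * Real.sqrt m then
      γ0 ^ ((Hscore σ F : ℤ) : ℝ) * η0 ^ ((Uscore σ F : ℝ) - u0 * m)
    else 0

def ff (k : ℕ) (u0 α γ η : ℝ) : ℝ :=
  η ^ (-(2*u0)) *
    ((α * ((γ^2 + (γ^2)⁻¹)/2) + 1 - α)^k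
      - 2*(1-η) * ((α * (γ^2)⁻¹ + (1-α))/2)^k
      + (1-η)^2 * (α * (γ^2)⁻¹/2)^k)

/-! ### Auxiliary lemmas -/

lemma zpow_sum' (γ : ℝ) (hγ : γ ≠ 0) {ι : Type*} (s : Finset ι) (f : ι → ℤ) :
    γ ^ (∑ i ∈ s, f i) = ∏ i ∈ s, γ ^ (f i) := by
  classical
  induction s using Finset.induction with
  | empty => simp
  | insert _ _ h ih => rw [Finset.sum_insert h, Finset.prod_insert h, zpow_add₀ hγ, ih]

lemma sum_fn_prod {C : Type*} [Fintype C] [DecidableEq C] (m : ℕ) (g : C → ℝ) :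
    ∑ F : Fin m → C, ∏ i, g (F i) = (∑ c : C, g c) ^ m := by
  rw [← Fin.prod_const m (∑ c : C, g c), Finset.prod_univ_sum, Fintype.piFinset_univ]

lemma count_agree (n : ℕ) (σ : Fin n → Bool) (g : ℕ → ℝ) :
    ∑ τ : Fin n → Bool, g ((Finset.univ.filter fun i => σ i = τ i).card)
      = ∑ z ∈ Finset.range (n+1), (n.choose z : ℝ) * g z := by
  classical
  have h1 : ∑ τ : Fin n → Bool, g ((Finset.univ.filter fun i => σ i = τ i).card)
      = ∑ s ∈ (Finset.univ : Finset (Fin n)).powerset, g s.card := by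
    refine Finset.sum_nbij' (fun τ => Finset.univ.filter fun i => σ i = τ i)
      (fun s => fun i => if i ∈ s then σ i else !(σ i)) ?_ ?_ ?_ ?_ ?_
    · intro τ _; simp [Finset.mem_powerset]
    · intro s _; simp
    · intro τ _
      funext i
      by_cases h : σ i = τ i
      · simpa [h] using h
      · simp only [Finset.mem_filter, Finset.mem_univ, true_and, h, if_false]
        revert h; cases σ i <;> cases τ i <;> simp
    · intro s _
      ext i
      simp only [Finset.mem_filter, Finset.mem_univ, true_and]
      by_cases h : i ∈ s
      · simp [h]
      · simp only [h, if_false, iff_false]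
        cases σ i <;> simp
    · intro τ _; rfl
  rw [h1, Finset.sum_powerset]
  simp only [Finset.card_univ, Fintype.card_fin]
  refine Finset.sum_congr rfl fun z _ => ?_
  rw [Finset.sum_congr rfl (fun t ht => by
        rw [(Finset.mem_powersetCard.1 ht).2]),
      Finset.sum_const, Finset.card_powersetCard, Finset.card_univ, Fintype.card_fin,
      nsmul_eq_mul]

lemma W1 {n k m : ℕ} (γ : ℝ) (hγ : γ ≠ 0) (σ : Fin n → Bool) (F : Formula n k m) :
    γ ^ (Hscore σ F) = ∏ i, ∏ j, (if σ (F i j).1 = (F i j).2 then γ else γ⁻¹) := by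
  unfold Hscore
  rw [zpow_sum' γ hγ]
  refine Finset.prod_congr rfl fun i _ => ?_
  rw [zpow_sum' γ hγ]
  refine Finset.prod_congr rfl fun j _ => ?_
  split <;> simp

lemma prodI {n k : ℕ} (σ : Fin n → Bool) (c : Fin k → Fin n × Bool) :
    (∏ j, (if σ (c j).1 = (c j).2 then (0:ℝ) else 1))
      = if clauseSat σ c then 0 else 1 := by
  by_cases h : clauseSat σ c
  · obtain ⟨j, hj⟩ := h
    rw [if_pos ⟨j, hj⟩]
    exact Finset.prod_eq_zero (Finset.mem_univ j) (by simp [hj])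
  · rw [if_neg h]
    refine Finset.prod_eq_one fun j _ => ?_
    rw [if_neg fun hj => h ⟨j, hj⟩]

lemma W2 {n k m : ℕ} (η : ℝ) (σ : Fin n → Bool) (F : Formula n k m) :
    η ^ (Uscore σ F)
      = ∏ i, (1 - (1-η) * ∏ j, (if σ (F i j).1 = (F i j).2 then (0:ℝ) else 1)) := by
  unfold Uscore
  rw [Finset.card_filter, ← Finset.prod_pow_eq_pow_sum]
  refine Finset.prod_congr rfl fun i _ => ?_
  rw [prodI]
  by_cases h : clauseSat σ (F i) <;> simp [h]

lemma cardsplit {n : ℕ} (σ τ : Fin n → Bool) :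
    ((Finset.univ.filter fun i => ¬ σ i = τ i).card : ℝ)
      = (n : ℝ) - ((Finset.univ.filter fun i => σ i = τ i).card : ℝ) := by
  have h := Finset.card_filter_add_card_filter_not
    (s := (Finset.univ : Finset (Fin n))) (p := fun i => σ i = τ i)
  rw [Finset.card_univ, Fintype.card_fin] at h
  have : ((Finset.univ.filter fun i => σ i = τ i).card : ℝ)
      + ((Finset.univ.filter fun i => ¬ σ i = τ i).card : ℝ) = (n:ℝ) := by
    exact_mod_cast congrArg (Nat.cast : ℕ → ℝ) h
  linarith

lemma sum_ite_agree {n : ℕ} (σ τ : Fin n → Bool) (f g : ℝ) :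
    (∑ i : Fin n, if σ i = τ i then f else g)
      = ((Finset.univ.filter fun i => σ i = τ i).card : ℝ) * f
        + ((n:ℝ) - ((Finset.univ.filter fun i => σ i = τ i).card : ℝ)) * g := by
  rw [Finset.sum_ite, Finset.sum_const, Finset.sum_const, ← cardsplit σ τ,
    nsmul_eq_mul, nsmul_eq_mul]

lemma T1 {n : ℕ} (σ τ : Fin n → Bool) (γ : ℝ) (hγ : γ ≠ 0) :
    (∑ ℓ : Fin n × Bool, (if σ ℓ.1 = ℓ.2 then γ else γ⁻¹) * (if τ ℓ.1 = ℓ.2 then γ else γ⁻¹))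
      = ((Finset.univ.filter fun i => σ i = τ i).card : ℝ) * (γ^2 + (γ^2)⁻¹)
        + ((n:ℝ) - ((Finset.univ.filter fun i => σ i = τ i).card : ℝ)) * 2 := by
  rw [Fintype.sum_prod_type, ← sum_ite_agree σ τ]
  refine Finset.sum_congr rfl fun i _ => ?_
  rw [Fintype.sum_bool]
  cases hσ : σ i <;> cases hτ : τ i <;> simp [hσ, hτ] <;> field_simp <;> ring

lemma T2 {n : ℕ} (σ τ : Fin n → Bool) (γ : ℝ) (hγ : γ ≠ 0) :
    (∑ ℓ : Fin n × Bool, (if σ ℓ.1 = ℓ.2 then γ else γ⁻¹) * (if τ ℓ.1 = ℓ.2 then γ else γ⁻¹)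
        * (if σ ℓ.1 = ℓ.2 then (0:ℝ) else 1))
      = ((Finset.univ.filter fun i => σ i = τ i).card : ℝ) * (γ^2)⁻¹
        + ((n:ℝ) - ((Finset.univ.filter fun i => σ i = τ i).card : ℝ)) * 1 := by
  rw [Fintype.sum_prod_type, ← sum_ite_agree σ τ]
  refine Finset.sum_congr rfl fun i _ => ?_
  rw [Fintype.sum_bool]
  cases hσ : σ i <;> cases hτ : τ i <;> simp [hσ, hτ] <;> field_simp <;> ring

lemma T3 {n : ℕ} (σ τ : Fin n → Bool) (γ : ℝ) (hγ : γ ≠ 0) :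
    (∑ ℓ : Fin n × Bool, (if σ ℓ.1 = ℓ.2 then γ else γ⁻¹) * (if τ ℓ.1 = ℓ.2 then γ else γ⁻¹)
        * (if τ ℓ.1 = ℓ.2 then (0:ℝ) else 1))
      = ((Finset.univ.filter fun i => σ i = τ i).card : ℝ) * (γ^2)⁻¹
        + ((n:ℝ) - ((Finset.univ.filter fun i => σ i = τ i).card : ℝ)) * 1 := by
  rw [Fintype.sum_prod_type, ← sum_ite_agree σ τ]
  refine Finset.sum_congr rfl fun i _ => ?_
  rw [Fintype.sum_bool]
  cases hσ : σ i <;> cases hτ : τ i <;> simp [hσ, hτ] <;> field_simp <;> ring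

lemma T4 {n : ℕ} (σ τ : Fin n → Bool) (γ : ℝ) (hγ : γ ≠ 0) :
    (∑ ℓ : Fin n × Bool, (if σ ℓ.1 = ℓ.2 then γ else γ⁻¹) * (if τ ℓ.1 = ℓ.2 then γ else γ⁻¹)
        * ((if σ ℓ.1 = ℓ.2 then (0:ℝ) else 1) * (if τ ℓ.1 = ℓ.2 then (0:ℝ) else 1)))
      = ((Finset.univ.filter fun i => σ i = τ i).card : ℝ) * (γ^2)⁻¹
        + ((n:ℝ) - ((Finset.univ.filter fun i => σ i = τ i).card : ℝ)) * 0 := by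
  rw [Fintype.sum_prod_type, ← sum_ite_agree σ τ]
  refine Finset.sum_congr rfl fun i _ => ?_
  rw [Fintype.sum_bool]
  cases hσ : σ i <;> cases hτ : τ i <;> simp [hσ, hτ] <;> field_simp <;> ring

def brk (k : ℕ) (α γ η : ℝ) : ℝ :=
  (α * ((γ^2 + (γ^2)⁻¹)/2) + 1 - α)^k
    - 2*(1-η) * ((α * (γ^2)⁻¹ + (1-α))/2)^k
    + (1-η)^2 * (α * (γ^2)⁻¹/2)^k

lemma pair_sum (n k m : ℕ) (hn : 1 ≤ n) (γ η : ℝ) (hγ : γ ≠ 0) (σ τ : Fin n → Bool) :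
    ∑ F : Formula n k m,
        ((γ ^ Hscore σ F * γ ^ Hscore τ F) * (η ^ Uscore σ F * η ^ Uscore τ F))
      = ((2*(n:ℝ))^k
          * brk k (((Finset.univ.filter fun i => σ i = τ i).card : ℝ)/(n:ℝ)) γ η)^m := by
  classical
  set z : ℝ := ((Finset.univ.filter fun i => σ i = τ i).card : ℝ) with hz
  have hn0 : (n:ℝ) ≠ 0 := Nat.cast_ne_zero.2 (by omega)
  have hsummand : ∀ F : Formula n k m,
      ((γ ^ Hscore σ F * γ ^ Hscore τ F) * (η ^ Uscore σ F * η ^ Uscore τ F))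
        = ∏ i, ((∏ j, (if σ ((F i) j).1 = ((F i) j).2 then γ else γ⁻¹)
              * (if τ ((F i) j).1 = ((F i) j).2 then γ else γ⁻¹))
            * ((1 - (1-η) * ∏ j, (if σ ((F i) j).1 = ((F i) j).2 then (0:ℝ) else 1))
             * (1 - (1-η) * ∏ j, (if τ ((F i) j).1 = ((F i) j).2 then (0:ℝ) else 1)))) := by
    intro F
    rw [W1 γ hγ σ F, W1 γ hγ τ F, W2 η σ F, W2 η τ F, ← Finset.prod_mul_distrib,
      ← Finset.prod_mul_distrib, ← Finset.prod_mul_distrib]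
    exact Finset.prod_congr rfl fun i _ => by rw [← Finset.prod_mul_distrib]
  simp only [hsummand]
  rw [sum_fn_prod m (fun c : Fin k → Fin n × Bool =>
      (∏ j, (if σ (c j).1 = (c j).2 then γ else γ⁻¹)
            * (if τ (c j).1 = (c j).2 then γ else γ⁻¹))
        * ((1 - (1-η) * ∏ j, (if σ (c j).1 = (c j).2 then (0:ℝ) else 1))
         * (1 - (1-η) * ∏ j, (if τ (c j).1 = (c j).2 then (0:ℝ) else 1))))]
  congr 1
  have hexp : ∑ c : Fin k → Fin n × Bool,
      ((∏ j, (if σ (c j).1 = (c j).2 then γ else γ⁻¹)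
            * (if τ (c j).1 = (c j).2 then γ else γ⁻¹))
        * ((1 - (1-η) * ∏ j, (if σ (c j).1 = (c j).2 then (0:ℝ) else 1))
         * (1 - (1-η) * ∏ j, (if τ (c j).1 = (c j).2 then (0:ℝ) else 1))))
      = (∑ ℓ : Fin n × Bool, (if σ ℓ.1 = ℓ.2 then γ else γ⁻¹) * (if τ ℓ.1 = ℓ.2 then γ else γ⁻¹))^k
        - (1-η) * (∑ ℓ : Fin n × Bool, (if σ ℓ.1 = ℓ.2 then γ else γ⁻¹) * (if τ ℓ.1 = ℓ.2 then γ else γ⁻¹)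
            * (if σ ℓ.1 = ℓ.2 then (0:ℝ) else 1))^k
        - (1-η) * (∑ ℓ : Fin n × Bool, (if σ ℓ.1 = ℓ.2 then γ else γ⁻¹) * (if τ ℓ.1 = ℓ.2 then γ else γ⁻¹)
            * (if τ ℓ.1 = ℓ.2 then (0:ℝ) else 1))^k
        + (1-η)^2 * (∑ ℓ : Fin n × Bool, (if σ ℓ.1 = ℓ.2 then γ else γ⁻¹) * (if τ ℓ.1 = ℓ.2 then γ else γ⁻¹)
            * ((if σ ℓ.1 = ℓ.2 then (0:ℝ) else 1) * (if τ ℓ.1 = ℓ.2 then (0:ℝ) else 1)))^k := by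
    rw [← sum_fn_prod k (fun ℓ : Fin n × Bool =>
          (if σ ℓ.1 = ℓ.2 then γ else γ⁻¹) * (if τ ℓ.1 = ℓ.2 then γ else γ⁻¹)),
        ← sum_fn_prod k (fun ℓ : Fin n × Bool =>
          (if σ ℓ.1 = ℓ.2 then γ else γ⁻¹) * (if τ ℓ.1 = ℓ.2 then γ else γ⁻¹)
            * (if σ ℓ.1 = ℓ.2 then (0:ℝ) else 1)),
        ← sum_fn_prod k (fun ℓ : Fin n × Bool =>
          (if σ ℓ.1 = ℓ.2 then γ else γ⁻¹) * (if τ ℓ.1 = ℓ.2 then γ else γ⁻¹)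
            * (if τ ℓ.1 = ℓ.2 then (0:ℝ) else 1)),
        ← sum_fn_prod k (fun ℓ : Fin n × Bool =>
          (if σ ℓ.1 = ℓ.2 then γ else γ⁻¹) * (if τ ℓ.1 = ℓ.2 then γ else γ⁻¹)
            * ((if σ ℓ.1 = ℓ.2 then (0:ℝ) else 1) * (if τ ℓ.1 = ℓ.2 then (0:ℝ) else 1))),
        Finset.mul_sum, Finset.mul_sum, Finset.mul_sum,
        ← Finset.sum_sub_distrib, ← Finset.sum_sub_distrib, ← Finset.sum_add_distrib]
    refine Finset.sum_congr rfl fun c _ => ?_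
    simp only [Finset.prod_mul_distrib]
    ring
  rw [hexp, T1 σ τ γ hγ, T2 σ τ γ hγ, T3 σ τ γ hγ, T4 σ τ γ hγ]
  rw [show (z * (γ^2 + (γ^2)⁻¹) + ((n:ℝ) - z) * 2)
      = (2*(n:ℝ)) * ((z/(n:ℝ)) * ((γ^2 + (γ^2)⁻¹)/2) + 1 - z/(n:ℝ)) by field_simp; ring,
    show (z * (γ^2)⁻¹ + ((n:ℝ) - z) * 1)
      = (2*(n:ℝ)) * (((z/(n:ℝ)) * (γ^2)⁻¹ + (1 - z/(n:ℝ)))/2) by field_simp,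
    show (z * (γ^2)⁻¹ + ((n:ℝ) - z) * 0)
      = (2*(n:ℝ)) * ((z/(n:ℝ)) * (γ^2)⁻¹/2) by field_simp; ring]
  unfold brk
  simp only [mul_pow]
  ring

/-- Lemma 5 of the paper: for arbitrary sequences `γ(z) ∈ [γ₀,1)`, `η(z) ∈ [η₀,1)`,
`E[X_*²] ≤ 2^n Σ_{z=0}^n C(n,z) f(z/n, γ(z), η(z))^m`. -/
theorem second_moment_bound (k n m : ℕ) (hk : 2 ≤ k) (hn : 1 ≤ n) (hm : 1 ≤ m)
    (p u0 γ0 η0 A : ℝ) (hp : 0 < p) (hp1 : p < 1) (hu0 : u0 = (1 - p) * ((2:ℝ)^k)⁻¹)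
    (hγ0 : 0 < γ0) (hγ1 : γ0 < 1) (hη0 : 0 < η0) (hη1 : η0 < 1)
    (he1 : 1 - η0 = (1 - γ0^2) * (1 + γ0^2)^(k-1))
    (he2 : u0 = η0 / ((1 + γ0^2)^k - (1 - η0)))
    (hA : 0 < A)
    (γ η : ℕ → ℝ)
    (hγ : ∀ z ≤ n, γ0 ≤ γ z ∧ γ z < 1) (hη : ∀ z ≤ n, η0 ≤ η z ∧ η z < 1) :
    EV (fun F : Formula n k m => (Xstar n k m u0 γ0 η0 A F)^2) ≤
      2^n * ∑ z ∈ Finset.range (n+1),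
        (n.choose z : ℝ) * ff k u0 ((z : ℝ)/(n : ℝ)) (γ z) (η z) ^ m := by
  classical
  set N : ℝ := (Fintype.card (Formula n k m) : ℝ) with hN
  have hn0 : (n:ℝ) ≠ 0 := Nat.cast_ne_zero.2 (by omega)
  have h2n : (0:ℝ) < 2*(n:ℝ) := by positivity
  have hNval : N = ((2*(n:ℝ))^k)^m := by
    rw [hN]
    simp only [Fintype.card_fun, Fintype.card_prod, Fintype.card_fin, Fintype.card_bool]
    push_cast
    ring
  have hNpos : (0:ℝ) < N := by rw [hNval]; positivity
  -- the summand of Xstar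
  set t : (Fin n → Bool) → Formula n k m → ℝ := fun σ F =>
    if 0 ≤ Hscore σ F ∧ u0 * m ≤ (Uscore σ F : ℝ) ∧
        (Uscore σ F : ℝ) ≤ u0 * m + A * Real.sqrt m then
      γ0 ^ ((Hscore σ F : ℤ) : ℝ) * η0 ^ ((Uscore σ F : ℝ) - u0 * m)
    else 0 with ht
  -- per-pair bound
  have hpair : ∀ σ τ : Fin n → Bool,
      (∑ F : Formula n k m, t σ F * t τ F) / N
        ≤ ff k u0 (((Finset.univ.filter fun i => σ i = τ i).card : ℝ)/(n:ℝ))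
            (γ (Finset.univ.filter fun i => σ i = τ i).card)
            (η (Finset.univ.filter fun i => σ i = τ i).card) ^ m := by
    intro σ τ
    set w : ℕ := (Finset.univ.filter fun i => σ i = τ i).card with hw
    have hwn : w ≤ n := le_trans (Finset.card_filter_le _ _) (by simp)
    obtain ⟨hγl, hγu⟩ := hγ w hwn
    obtain ⟨hηl, hηu⟩ := hη w hwn
    have hγp : (0:ℝ) < γ w := lt_of_lt_of_le hγ0 hγl
    have hηp : (0:ℝ) < η w := lt_of_lt_of_le hη0 hηl
    -- pointwise bound
    have hpt : ∀ F : Formula n k m, t σ F * t τ F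
        ≤ (η w) ^ (-(2*u0)*(m:ℝ)) *
            (((γ w) ^ Hscore σ F * (γ w) ^ Hscore τ F)
              * ((η w) ^ Uscore σ F * (η w) ^ Uscore τ F)) := by
      intro F
      have hbnn : (0:ℝ) ≤ (η w) ^ (-(2*u0)*(m:ℝ)) *
          (((γ w) ^ Hscore σ F * (γ w) ^ Hscore τ F)
            * ((η w) ^ Uscore σ F * (η w) ^ Uscore τ F)) := by
        have h1 := Real.rpow_nonneg hηp.le (-(2*u0)*(m:ℝ))
        have h2 := zpow_pos hγp (Hscore σ F)
        have h3 := zpow_pos hγp (Hscore τ F)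
        have h4 := pow_pos hηp (Uscore σ F)
        have h5 := pow_pos hηp (Uscore τ F)
        positivity
      by_cases h1 : 0 ≤ Hscore σ F ∧ u0 * m ≤ (Uscore σ F : ℝ) ∧
          (Uscore σ F : ℝ) ≤ u0 * m + A * Real.sqrt m
      · by_cases h2 : 0 ≤ Hscore τ F ∧ u0 * m ≤ (Uscore τ F : ℝ) ∧
            (Uscore τ F : ℝ) ≤ u0 * m + A * Real.sqrt m
        · rw [ht]
          simp only [if_pos h1, if_pos h2]
          have hHσ : (0:ℝ) ≤ ((Hscore σ F : ℤ) : ℝ) := by exact_mod_cast h1.1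
          have hHτ : (0:ℝ) ≤ ((Hscore τ F : ℤ) : ℝ) := by exact_mod_cast h2.1
          have hUσ : (0:ℝ) ≤ (Uscore σ F : ℝ) - u0 * m := by linarith [h1.2.1]
          have hUτ : (0:ℝ) ≤ (Uscore τ F : ℝ) - u0 * m := by linarith [h2.2.1]
          have a1 : γ0 ^ ((Hscore σ F : ℤ) : ℝ) ≤ (γ w) ^ ((Hscore σ F : ℤ) : ℝ) :=
            Real.rpow_le_rpow hγ0.le hγl hHσ
          have a2 : η0 ^ ((Uscore σ F : ℝ) - u0*m) ≤ (η w) ^ ((Uscore σ F : ℝ) - u0*m) :=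
            Real.rpow_le_rpow hη0.le hηl hUσ
          have a3 : γ0 ^ ((Hscore τ F : ℤ) : ℝ) ≤ (γ w) ^ ((Hscore τ F : ℤ) : ℝ) :=
            Real.rpow_le_rpow hγ0.le hγl hHτ
          have a4 : η0 ^ ((Uscore τ F : ℝ) - u0*m) ≤ (η w) ^ ((Uscore τ F : ℝ) - u0*m) :=
            Real.rpow_le_rpow hη0.le hηl hUτ
          have step : γ0 ^ ((Hscore σ F : ℤ) : ℝ) * η0 ^ ((Uscore σ F : ℝ) - u0*m)
              * (γ0 ^ ((Hscore τ F : ℤ) : ℝ) * η0 ^ ((Uscore τ F : ℝ) - u0*m))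
              ≤ (γ w) ^ ((Hscore σ F : ℤ) : ℝ) * (η w) ^ ((Uscore σ F : ℝ) - u0*m)
              * ((γ w) ^ ((Hscore τ F : ℤ) : ℝ) * (η w) ^ ((Uscore τ F : ℝ) - u0*m)) := by
            apply mul_le_mul
            · exact mul_le_mul a1 a2 (Real.rpow_nonneg hη0.le _) (Real.rpow_nonneg hγp.le _)
            · exact mul_le_mul a3 a4 (Real.rpow_nonneg hη0.le _) (Real.rpow_nonneg hγp.le _)
            · exact mul_nonneg (Real.rpow_nonneg hγ0.le _) (Real.rpow_nonneg hη0.le _)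
            · exact mul_nonneg (Real.rpow_nonneg hγp.le _) (Real.rpow_nonneg hηp.le _)
          refine le_trans step (le_of_eq ?_)
          rw [Real.rpow_intCast, Real.rpow_intCast,
            show (Uscore σ F : ℝ) - u0*m = (Uscore σ F : ℝ) + (-u0*m) by ring,
            show (Uscore τ F : ℝ) - u0*m = (Uscore τ F : ℝ) + (-u0*m) by ring,
            Real.rpow_add hηp, Real.rpow_add hηp,
            show (-(2*u0)*(m:ℝ)) = (-u0*(m:ℝ)) + (-u0*(m:ℝ)) by ring,
            Real.rpow_add hηp, Real.rpow_natCast, Real.rpow_natCast]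
          ring
        · rw [ht]; simp only [if_neg h2, mul_zero]; exact hbnn
      · rw [ht]; simp only [if_neg h1, zero_mul]; exact hbnn
    -- expectation of the bound
    have hsum : ∑ F : Formula n k m, t σ F * t τ F
        ≤ (η w) ^ (-(2*u0)*(m:ℝ)) * ((2*(n:ℝ))^k * brk k ((w:ℝ)/(n:ℝ)) (γ w) (η w))^m := by
      calc ∑ F : Formula n k m, t σ F * t τ F
          ≤ ∑ F : Formula n k m, (η w) ^ (-(2*u0)*(m:ℝ)) *
              (((γ w) ^ Hscore σ F * (γ w) ^ Hscore τ F)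
                * ((η w) ^ Uscore σ F * (η w) ^ Uscore τ F)) :=
            Finset.sum_le_sum fun F _ => hpt F
        _ = (η w) ^ (-(2*u0)*(m:ℝ)) * ((2*(n:ℝ))^k * brk k ((w:ℝ)/(n:ℝ)) (γ w) (η w))^m := by
            rw [← Finset.mul_sum, pair_sum n k m hn (γ w) (η w) (ne_of_gt hγp) σ τ]
    have hff : ff k u0 ((w:ℝ)/(n:ℝ)) (γ w) (η w) ^ m
        = (η w) ^ (-(2*u0)*(m:ℝ)) * brk k ((w:ℝ)/(n:ℝ)) (γ w) (η w) ^ m := by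
      have : ff k u0 ((w:ℝ)/(n:ℝ)) (γ w) (η w)
          = (η w) ^ (-(2*u0)) * brk k ((w:ℝ)/(n:ℝ)) (γ w) (η w) := rfl
      rw [this, mul_pow, ← Real.rpow_natCast ((η w) ^ (-(2*u0))) m,
        ← Real.rpow_mul hηp.le]
    calc (∑ F : Formula n k m, t σ F * t τ F) / N
        ≤ ((η w) ^ (-(2*u0)*(m:ℝ))
            * ((2*(n:ℝ))^k * brk k ((w:ℝ)/(n:ℝ)) (γ w) (η w))^m) / N := by
          exact div_le_div_of_nonneg_right hsum hNpos.le
      _ = ff k u0 ((w:ℝ)/(n:ℝ)) (γ w) (η w) ^ m := by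
          rw [hNval, hff, mul_pow]
          have h2nk : ((2*(n:ℝ))^k)^m ≠ 0 := by positivity
          field_simp
  -- expand the square
  have hsq : EV (fun F : Formula n k m => (Xstar n k m u0 γ0 η0 A F)^2)
      = ∑ σ : Fin n → Bool, ∑ τ : Fin n → Bool,
          (∑ F : Formula n k m, t σ F * t τ F) / N := by
    unfold EV
    have hXF : ∀ F : Formula n k m, (Xstar n k m u0 γ0 η0 A F)^2
        = ∑ σ : Fin n → Bool, ∑ τ : Fin n → Bool, t σ F * t τ F := by
      intro F
      rw [sq]
      show Xstar n k m u0 γ0 η0 A F * Xstar n k m u0 γ0 η0 A F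
        = ∑ σ : Fin n → Bool, ∑ τ : Fin n → Bool, t σ F * t τ F
      rw [Xstar, Finset.sum_mul_sum]
    simp only [hXF]
    rw [Finset.sum_comm, Finset.sum_div]
    refine Finset.sum_congr rfl fun σ _ => ?_
    rw [Finset.sum_comm, Finset.sum_div]
  rw [hsq]
  calc ∑ σ : Fin n → Bool, ∑ τ : Fin n → Bool, (∑ F : Formula n k m, t σ F * t τ F) / N
      ≤ ∑ σ : Fin n → Bool, ∑ τ : Fin n → Bool,
          ff k u0 (((Finset.univ.filter fun i => σ i = τ i).card : ℝ)/(n:ℝ))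
            (γ (Finset.univ.filter fun i => σ i = τ i).card)
            (η (Finset.univ.filter fun i => σ i = τ i).card) ^ m :=
        Finset.sum_le_sum fun σ _ => Finset.sum_le_sum fun τ _ => hpair σ τ
    _ = ∑ σ : Fin n → Bool, ∑ z ∈ Finset.range (n+1),
          (n.choose z : ℝ) * ff k u0 ((z:ℝ)/(n:ℝ)) (γ z) (η z) ^ m :=
        Finset.sum_congr rfl fun σ _ =>
          count_agree n σ (fun z => ff k u0 ((z:ℝ)/(n:ℝ)) (γ z) (η z) ^ m)
    _ = 2^n * ∑ z ∈ Finset.range (n+1),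
          (n.choose z : ℝ) * ff k u0 ((z:ℝ)/(n:ℝ)) (γ z) (η z) ^ m := by
        rw [Finset.sum_const, Finset.card_univ, nsmul_eq_mul]
        congr 1
        simp [Fintype.card_fun]

end
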